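/- arXiv:2406.10805 — 3 statements merged into one kernel-verified Lean document; each statement's English description precedes it below -/
import Mathlib

section
/- For every μ > 0 and every positive integer r, the even-order raw moments of SSLUD(μ) satisfy ∫_{ℝ} x^{2r} · g(x) dx = (2r)! ; in particular the second raw moment equals 2 and the fourth raw moment equals 24. -/
open MeasureTheory Real

noncomputable def g (μ : ℝ) (x : ℝ) : ℝ :=
  if x < -μ then 0
  else if x < μ then Real.exp (-|x|) * (x / (2 * μ) + 1 / 2)
  else Real.exp (-x)

/-!
The uniform ramp `x / (2μ) + 1/2` on `[-μ, μ]` and its reflection add up to `1`, so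
`g μ x + g μ (-x) = exp (-|x|)`. Hence against an even function `f`, `g μ` integrates like half
the Laplace density: `∫ f g = (∫ f e^{-|x|}) / 2`, and `∫ x^n e^{-|x|} = 2 Γ(n + 1) = 2 n!`
for even `n`.
-/

open Set
open scoped Nat

theorem integrable_comp_abs {E : Type*} [NormedAddCommGroup E] {f : ℝ → E} (hf : IntegrableOn f (Ioi 0)) :
    Integrable (fun x => f |x|) := by
  have hIoi : IntegrableOn (fun x => f |x|) (Ioi 0) :=
    hf.congr_fun (fun x hx => by rw [abs_of_pos hx]) measurableSet_Ioi
  have hIic : IntegrableOn (fun x => f |x|) (Iic 0) := by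
    have neg_embedding : MeasurableEmbedding fun x : ℝ => -x :=
      (Homeomorph.neg ℝ).measurableEmbedding
    rw [← Measure.map_neg_eq_self (volume : Measure ℝ), neg_embedding.integrableOn_map_iff]
    simp_rw [Function.comp_def, abs_neg, neg_preimage, neg_Iic, neg_zero]
    exact (integrableOn_Ici_iff_integrableOn_Ioi (f := fun x => f |x|)).mpr hIoi
  rw [← integrableOn_univ, ← Iic_union_Ioi (a := (0 : ℝ)), integrableOn_union]
  exact ⟨hIic, hIoi⟩

theorem integral_pow_mul_exp_neg_Ioi (n : ℕ) :
    ∫ x in Ioi (0 : ℝ), x ^ n * exp (-x) = n ! := by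
  rw [← Real.Gamma_nat_eq_factorial, Real.Gamma_eq_integral (by positivity)]
  refine setIntegral_congr_fun measurableSet_Ioi fun x _ => ?_
  rw [add_sub_cancel_right, rpow_natCast, mul_comm]

theorem integrableOn_pow_mul_exp_neg_Ioi (n : ℕ) :
    IntegrableOn (fun x : ℝ => x ^ n * exp (-x)) (Ioi 0) :=
  (Real.GammaIntegral_convergent (s := n + 1) (by positivity)).congr_fun
    (fun x _ => by simp only [add_sub_cancel_right, rpow_natCast]; rw [mul_comm]) measurableSet_Ioi

theorem Even.pow_mul_exp_neg_abs {n : ℕ} (hn : Even n) :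
    (fun x : ℝ => x ^ n * exp (-|x|)) = fun x => |x| ^ n * exp (-|x|) :=
  funext fun x => by rw [hn.pow_abs]

theorem integrable_pow_mul_exp_neg_abs {n : ℕ} (hn : Even n) :
    Integrable fun x : ℝ => x ^ n * exp (-|x|) := by
  rw [hn.pow_mul_exp_neg_abs]
  exact integrable_comp_abs (integrableOn_pow_mul_exp_neg_Ioi n)

theorem integral_pow_mul_exp_neg_abs {n : ℕ} (hn : Even n) :
    ∫ x : ℝ, x ^ n * exp (-|x|) = 2 * n ! := by
  rw [hn.pow_mul_exp_neg_abs, integral_comp_abs (f := fun t => t ^ n * exp (-t)),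
    integral_pow_mul_exp_neg_Ioi]

section SSLUD

variable {μ : ℝ}

theorem g_add_g_neg (hμ : 0 < μ) (x : ℝ) : g μ x + g μ (-x) = exp (-|x|) := by
  wlog hx : 0 ≤ x generalizing x
  · simpa [add_comm] using this (-x) (by linarith)
  unfold g
  simp only [abs_neg, abs_of_nonneg hx]
  split_ifs <;> try linarith
  · field_simp
    ring
  · obtain rfl : x = μ := by linarith
    field_simp
    ring

theorem g_nonneg (hμ : 0 < μ) (x : ℝ) : 0 ≤ g μ x := by
  unfold g
  split_ifs
  · exact le_rfl
  · have : 0 ≤ x / (2 * μ) + 1 / 2 := by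
      rw [div_add' _ _ _ (by positivity), le_div_iff₀ (by positivity)]
      linarith
    positivity
  · positivity

theorem g_le_exp_neg_abs (hμ : 0 < μ) (x : ℝ) : g μ x ≤ exp (-|x|) := by
  linarith [g_add_g_neg hμ x, g_nonneg hμ (-x)]

theorem measurable_g (μ : ℝ) : Measurable (g μ) := by
  unfold g
  refine Measurable.ite measurableSet_Iio measurable_const
    (Measurable.ite measurableSet_Iio ?_ ?_) <;> fun_prop

theorem integral_mul_g_of_even (hμ : 0 < μ) {f : ℝ → ℝ} (hf : ∀ x, f (-x) = f x)
    (hint : Integrable fun x => f x * exp (-|x|)) :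
    ∫ x, f x * g μ x = (∫ x, f x * exp (-|x|)) / 2 := by
  have hfm : AEStronglyMeasurable f := by
    refine (hint.aestronglyMeasurable.mul (continuous_exp.comp
      continuous_abs).aestronglyMeasurable).congr (ae_of_all _ fun x => ?_)
    simp [mul_assoc, ← exp_add]
  have hfg : Integrable fun x => f x * g μ x := by
    refine hint.mono (hfm.mul (measurable_g μ).aestronglyMeasurable) (ae_of_all _ fun x => ?_)
    rw [norm_mul, norm_mul, norm_of_nonneg (g_nonneg hμ x), norm_of_nonneg (exp_pos _).le]
    exact mul_le_mul_of_nonneg_left (g_le_exp_neg_abs hμ x) (norm_nonneg _)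
  have hfg_neg : ∫ x, f x * g μ (-x) = ∫ x, f x * g μ x := by
    simpa [hf] using integral_neg_eq_self (fun x => f x * g μ x) volume
  have hfg_comp_neg : Integrable fun x => f x * g μ (-x) := by simpa [hf] using hfg.comp_neg
  have hsum : ∫ x, f x * exp (-|x|) = (∫ x, f x * g μ x) + ∫ x, f x * g μ (-x) := by
    rw [← integral_add hfg hfg_comp_neg]
    simp_rw [← mul_add, g_add_g_neg hμ]
  linarith

theorem integral_pow_mul_g_of_even {n : ℕ} (hμ : 0 < μ) (hn : Even n) :
    ∫ x : ℝ, x ^ n * g μ x = n ! := by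
  rw [integral_mul_g_of_even hμ (f := (· ^ n)) hn.neg_pow (integrable_pow_mul_exp_neg_abs hn),
    integral_pow_mul_exp_neg_abs hn]
  ring

end SSLUD

theorem sslud_even_moments (μ : ℝ) (hμ : 0 < μ) :
    (∀ r : ℕ, 0 < r → (∫ x : ℝ, x ^ (2 * r) * g μ x) = (Nat.factorial (2 * r) : ℝ)) ∧
    (∫ x : ℝ, x ^ 2 * g μ x) = 2 ∧ (∫ x : ℝ, x ^ 4 * g μ x) = 24 := by
  refine ⟨fun r _ => integral_pow_mul_g_of_even hμ (even_two_mul r), ?_, ?_⟩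
  · simpa [Nat.factorial] using integral_pow_mul_g_of_even hμ (n := 2) even_two
  · simpa [Nat.factorial] using integral_pow_mul_g_of_even hμ (n := 4) (by decide)
end

section
/- For every μ with 0 < μ ≤ ln 2 (equivalently, G(μ) = 1 - e^{-μ} ≤ 1/2), the median of SSLUD(μ) equals ln 2; that is, G(ln 2) = 1/2. -/
open MeasureTheory Real

noncomputable def G (μ : ℝ) (x : ℝ) : ℝ := ∫ t in Set.Iic x, g μ t

/-! On `[-μ, μ]` the density is `e^{-|t|}` times the weight `t / (2μ) + 1/2`, which adds up to `1`
with its reflection under `t ↦ -t`; hence `G(μ) = ∫₀^μ e^{-t} dt = 1 - e^{-μ}`. Beyond `μ` the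
density is `e^{-t}`, so `G(x) = 1 - e^{-x}` for all `x ≥ μ`, and `x = ln 2` gives `1/2`. -/

open Set intervalIntegral

theorem intervalIntegral.integral_neg_self_eq_integral_add_comp_neg {E : Type*}
    [NormedAddCommGroup E] [NormedSpace ℝ E] {f : ℝ → E} {a : ℝ}
    (hf : IntervalIntegrable f volume (-a) a) :
    ∫ x in -a..a, f x = ∫ x in 0..a, (f x + f (-x)) := by
  have h0 : (0 : ℝ) ∈ uIcc (-a) a := by
    rcases le_total 0 a with h | h <;> simp [uIcc, h]
  have hleft : IntervalIntegrable f volume (-a) 0 := hf.mono_set (uIcc_subset_uIcc_left h0)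
  have hright : IntervalIntegrable f volume 0 a := hf.mono_set (uIcc_subset_uIcc_right h0)
  have hleft' : IntervalIntegrable (fun x ↦ f (-x)) volume 0 a := by
    simpa using ((IntervalIntegrable.iff_comp_neg (by simp)).mp hleft).symm
  rw [← integral_add_adjacent_intervals hleft hright, integral_add hright hleft', add_comm,
    integral_comp_neg, neg_zero]

theorem integral_exp_neg (a b : ℝ) : ∫ x in a..b, exp (-x) = exp (-a) - exp (-b) := by
  rw [integral_comp_neg (fun x ↦ exp x), integral_exp]

section SSLUD

variable {μ x : ℝ}

theorem g_of_le_neg (hμ : 0 < μ) (hx : x ≤ -μ) : g μ x = 0 := by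
  rcases hx.lt_or_eq with hx | rfl
  · simp [g, hx]
  · have : -μ / (2 * μ) + 2⁻¹ = 0 := by field_simp; ring
    simp [g, this, hμ]

theorem g_of_mem_Icc (hμ : 0 < μ) (hx : x ∈ Icc (-μ) μ) :
    g μ x = exp (-|x|) * (x / (2 * μ) + 1 / 2) := by
  rcases hx.2.lt_or_eq with hx' | rfl
  · simp [g, hx', hx.1.not_gt]
  · have : x / (2 * x) + 2⁻¹ = 1 := by field_simp; ring
    simp [g, this, abs_of_pos hμ, hx.1.not_gt]

theorem g_of_le (hμ : 0 ≤ μ) (hx : μ ≤ x) : g μ x = exp (-x) := by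
  simp [g, hx.not_gt, (show -μ ≤ x by linarith).not_gt]

theorem G_eq_integral (hμ : 0 < μ) (hx : -μ ≤ x) : G μ x = ∫ t in -μ..x, g μ t := by
  rw [G, integral_of_le hx, setIntegral_eq_of_subset_of_forall_sdiff_eq_zero measurableSet_Iic
    Ioc_subset_Iic_self]
  intro t ⟨htx, ht⟩
  exact g_of_le_neg hμ (by simp_all)

theorem integral_g_neg_self (hμ : 0 < μ) : ∫ t in -μ..μ, g μ t = 1 - exp (-μ) := by
  have hIcc : EqOn (g μ) (fun t ↦ exp (-|t|) * (t / (2 * μ) + 1 / 2)) (uIcc (-μ) μ) := by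
    intro t ht
    exact g_of_mem_Icc hμ (by rwa [uIcc_of_le (by linarith)] at ht)
  have hint : IntervalIntegrable (fun t ↦ exp (-|t|) * (t / (2 * μ) + 1 / 2)) volume (-μ) μ :=
    (by fun_prop : Continuous _).intervalIntegrable _ _
  have hsym : ∀ t, exp (-|t|) * (t / (2 * μ) + 1 / 2) + exp (-|-t|) * (-t / (2 * μ) + 1 / 2)
      = exp (-|t|) := by
    intro t; rw [abs_neg]; ring
  rw [integral_congr hIcc, integral_neg_self_eq_integral_add_comp_neg hint]
  simp only [hsym]
  rw [integral_congr (g := fun t ↦ exp (-t)), integral_exp_neg, neg_zero, exp_zero]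
  intro t ht
  rw [uIcc_of_le hμ.le] at ht
  simp [abs_of_nonneg ht.1]

theorem continuousOn_g_Icc (hμ : 0 < μ) : ContinuousOn (g μ) (Icc (-μ) μ) :=
  (by fun_prop : Continuous fun t ↦ exp (-|t|) * (t / (2 * μ) + 1 / 2)).continuousOn.congr
    fun _ ht ↦ g_of_mem_Icc hμ ht

theorem continuousOn_g_Ici (hμ : 0 ≤ μ) : ContinuousOn (g μ) (Ici μ) :=
  (by fun_prop : Continuous fun t ↦ exp (-t)).continuousOn.congr fun _ ht ↦ g_of_le hμ ht

theorem G_eq_one_sub_exp_neg (hμ : 0 < μ) (hx : μ ≤ x) : G μ x = 1 - exp (-x) := by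
  have hcenter := (continuousOn_g_Icc hμ).intervalIntegrable_of_Icc (μ := volume) (by linarith)
  have htail := ((continuousOn_g_Ici hμ.le).mono Icc_subset_Ici_self).intervalIntegrable_of_Icc
    (μ := volume) hx
  have htail_eq : EqOn (g μ) (fun t ↦ exp (-t)) (uIcc μ x) := fun t ht ↦
    g_of_le hμ.le (by rw [uIcc_of_le hx] at ht; exact ht.1)
  rw [G_eq_integral hμ (by linarith), ← integral_add_adjacent_intervals hcenter htail,
    integral_g_neg_self hμ, integral_congr htail_eq, integral_exp_neg]
  ring

end SSLUD

theorem sslud_median (μ : ℝ) (hμ : 0 < μ) (hμ' : μ ≤ Real.log 2) :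
    G μ (Real.log 2) = 1 / 2 := by
  rw [G_eq_one_sub_exp_neg hμ hμ', exp_neg, exp_log two_pos]
  norm_num
end

section
/- For every μ > 0 and every real a with -μ ≤ a < 0, the mean deviation of SSLUD(μ) about a satisfies ∫_{ℝ} |x - a| · g(x) dx = (a/μ) e^{-μ} + (a/μ - 2/μ + 1) e^{a} + (2/μ - a). -/
open MeasureTheory Real

/-!
`g μ x = exp (-|x|) * max 0 (min 1 ((x + μ) / (2 * μ)))` is twice the Laplace density times the
uniform distribution function on `[-μ, μ]`; in particular `g μ` is continuous and vanishes left
of `-μ`. On each of `[-μ, a]`, `[a, 0]`, `[0, μ]` and `(μ, ∞)` the integrand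
`|x - a| * g μ x` is then a polynomial of degree at most two times `exp x` or `exp (-x)`, which has
an elementary antiderivative.
-/

open Set Filter Topology intervalIntegral

theorem integral_eq_intervalIntegral_add_integral_Ioi {E : Type*} [NormedAddCommGroup E]
    [NormedSpace ℝ E] {f : ℝ → E} {l u : ℝ} (hlu : l ≤ u) (hzero : ∀ x ≤ l, f x = 0)
    (hmid : IntegrableOn f (Ioc l u)) (htail : IntegrableOn f (Ioi u)) :
    ∫ x, f x = (∫ x in l..u, f x) + ∫ x in Ioi u, f x := by
  have hdiff : ∀ x ∈ Iic u \ Ioc l u, f x = 0 := fun x hx =>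
    hzero x (not_lt.1 fun h => hx.2 ⟨h, hx.1⟩)
  rw [← integral_Iic_add_Ioi (hmid.of_forall_sdiff_eq_zero measurableSet_Iic hdiff) htail,
    setIntegral_eq_of_subset_of_forall_sdiff_eq_zero measurableSet_Iic Ioc_subset_Iic_self hdiff,
    integral_of_le hlu]

theorem integral_sub_mul_sub_mul_exp (s t l u : ℝ) :
    ∫ x in l..u, (x - s) * (x - t) * exp x =
      ((u - s) * (u - t) - (2 * u - s - t) + 2) * exp u
        - ((l - s) * (l - t) - (2 * l - s - t) + 2) * exp l := by
  refine integral_eq_sub_of_hasDerivAt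
    (f := fun x => ((x - s) * (x - t) - (2 * x - s - t) + 2) * exp x) (fun x _ => ?_)
    ((by fun_prop : Continuous fun x => (x - s) * (x - t) * exp x).intervalIntegrable _ _)
  have hP : HasDerivAt (fun x => (x - s) * (x - t) - (2 * x - s - t) + 2) (2 * x - s - t - 2) x :=
    ((((hasDerivAt_id' x).sub_const s).mul ((hasDerivAt_id' x).sub_const t)).sub
      ((((hasDerivAt_id' x).const_mul 2).sub_const s).sub_const t)).add_const 2
      |>.congr_deriv (by ring)
  exact (hP.mul (hasDerivAt_exp x)).congr_deriv (by ring)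

theorem integral_sub_mul_sub_mul_exp_neg (s t l u : ℝ) :
    ∫ x in l..u, (x - s) * (x - t) * exp (-x) =
      ((l - s) * (l - t) + (2 * l - s - t) + 2) * exp (-l)
        - ((u - s) * (u - t) + (2 * u - s - t) + 2) * exp (-u) := by
  calc ∫ x in l..u, (x - s) * (x - t) * exp (-x)
      = ∫ x in l..u, (fun y => (y - -s) * (y - -t) * exp y) (-x) := by
        congr 1; funext x; ring
    _ = ∫ y in -u..-l, (y - -s) * (y - -t) * exp y :=
        integral_comp_neg fun y => (y - -s) * (y - -t) * exp y
    _ = _ := by rw [integral_sub_mul_sub_mul_exp]; ring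

theorem hasDerivAt_neg_sub_add_one_mul_exp_neg (b x : ℝ) :
    HasDerivAt (fun x => -((x - b + 1) * exp (-x))) ((x - b) * exp (-x)) x :=
  ((((hasDerivAt_id' x).sub_const b).add_const 1).mul (hasDerivAt_neg x).exp).neg.congr_deriv
    (by ring)

theorem tendsto_neg_sub_add_one_mul_exp_neg (b : ℝ) :
    Tendsto (fun x => -((x - b + 1) * exp (-x))) atTop (𝓝 0) := by
  have := ((tendsto_pow_mul_exp_neg_atTop_nhds_zero 1).add
    (tendsto_exp_neg_atTop_nhds_zero.const_mul (1 - b))).neg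
  simp only [pow_one, mul_zero, add_zero, neg_zero] at this
  convert this using 2
  ring

theorem integral_Ioi_sub_mul_exp_neg {b c : ℝ} (hbc : b ≤ c) :
    ∫ x in Ioi c, (x - b) * exp (-x) = (c - b + 1) * exp (-c) := by
  rw [integral_Ioi_of_hasDerivAt_of_nonneg' (fun x _ => hasDerivAt_neg_sub_add_one_mul_exp_neg b x)
    (fun x hx => ?_) (tendsto_neg_sub_add_one_mul_exp_neg b)]
  · ring
  · have : 0 ≤ x - b := by linarith [hx.out]
    positivity

theorem integrableOn_Ioi_sub_mul_exp_neg {b c : ℝ} (hbc : b ≤ c) :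
    IntegrableOn (fun x => (x - b) * exp (-x)) (Ioi c) :=
  integrableOn_Ioi_deriv_of_nonneg' (fun x _ => hasDerivAt_neg_sub_add_one_mul_exp_neg b x)
    (fun x hx => mul_nonneg (by linarith [hx.out]) (exp_pos _).le)
    (tendsto_neg_sub_add_one_mul_exp_neg b)

theorem g_eq_exp_neg_abs_mul_max_min {μ : ℝ} (hμ : 0 < μ) (x : ℝ) :
    g μ x = exp (-|x|) * max 0 (min 1 ((x + μ) / (2 * μ))) := by
  unfold g
  split_ifs with hlow hhigh
  · have : (x + μ) / (2 * μ) ≤ 0 :=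
      div_nonpos_of_nonpos_of_nonneg (by linarith) (by positivity)
    simp [min_le_of_right_le this]
  · have h0 : 0 ≤ (x + μ) / (2 * μ) := by apply div_nonneg <;> linarith
    have h1 : (x + μ) / (2 * μ) ≤ 1 := by rw [div_le_one (by positivity)]; linarith
    rw [min_eq_right h1, max_eq_right h0]
    field_simp
  · have h1 : 1 ≤ (x + μ) / (2 * μ) := by rw [le_div_iff₀ (by positivity)]; linarith
    rw [min_eq_left h1, max_eq_right zero_le_one, abs_of_nonneg (by linarith), mul_one]

theorem continuous_g {μ : ℝ} (hμ : 0 < μ) : Continuous (g μ) := by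
  simp_rw [funext (g_eq_exp_neg_abs_mul_max_min hμ)]
  fun_prop

theorem g_eq_zero_of_le {μ x : ℝ} (hμ : 0 < μ) (hx : x ≤ -μ) : g μ x = 0 := by
  have : (x + μ) / (2 * μ) ≤ 0 := div_nonpos_of_nonpos_of_nonneg (by linarith) (by positivity)
  simp [g_eq_exp_neg_abs_mul_max_min hμ, min_le_of_right_le this]

theorem g_eq_of_mem_Icc {μ x : ℝ} (hμ : 0 < μ) (hx : x ∈ Icc (-μ) μ) :
    g μ x = (x + μ) / (2 * μ) * exp (-|x|) := by
  have h0 : 0 ≤ (x + μ) / (2 * μ) := by apply div_nonneg <;> linarith [hx.1]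
  have h1 : (x + μ) / (2 * μ) ≤ 1 := by rw [div_le_one (by positivity)]; linarith [hx.2]
  rw [g_eq_exp_neg_abs_mul_max_min hμ, min_eq_right h1, max_eq_right h0, mul_comm]

theorem g_eq_exp_neg_of_le {μ x : ℝ} (hμ : 0 < μ) (hx : μ ≤ x) : g μ x = exp (-x) := by
  have h1 : 1 ≤ (x + μ) / (2 * μ) := by rw [le_div_iff₀ (by positivity)]; linarith
  rw [g_eq_exp_neg_abs_mul_max_min hμ, min_eq_left h1, max_eq_right zero_le_one,
    abs_of_nonneg (by linarith), mul_one]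

theorem intervalIntegral_abs_sub_mul_g {μ a : ℝ} (hμ : 0 < μ) (h1 : -μ ≤ a) (h2 : a ≤ 0) :
    ∫ x in -μ..μ, |x - a| * g μ x
      = -(1 / (2 * μ)) * (∫ x in -μ..a, (x - a) * (x - -μ) * exp x)
        + 1 / (2 * μ) * (∫ x in a..0, (x - a) * (x - -μ) * exp x)
        + 1 / (2 * μ) * ∫ x in 0..μ, (x - a) * (x - -μ) * exp (-x) := by
  have hii : ∀ l u, IntervalIntegrable (fun x => |x - a| * g μ x) volume l u :=
    ((continuous_abs.comp (continuous_sub_right a)).mul (continuous_g hμ)).intervalIntegrable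
  have hpiece : ∀ {l u : ℝ} (c : ℝ) (f : ℝ → ℝ), l ≤ u →
      (∀ x ∈ Icc l u, |x - a| * g μ x = c * f x) →
      ∫ x in l..u, |x - a| * g μ x = c * ∫ x in l..u, f x := fun c f hlu hf => by
    rw [← intervalIntegral.integral_const_mul]
    exact integral_congr fun x hx => hf x (uIcc_of_le hlu ▸ hx)
  rw [← integral_add_adjacent_intervals (hii _ 0) (hii 0 μ),
    ← integral_add_adjacent_intervals (hii _ a) (hii a 0)]
  congr 2
  · refine hpiece _ _ h1 fun x hx => ?_
    rw [g_eq_of_mem_Icc hμ ⟨hx.1, by linarith [hx.2]⟩, abs_of_nonpos (by linarith [hx.2]),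
      abs_of_nonpos (by linarith [hx.2]), neg_neg]
    field_simp
    ring
  · refine hpiece _ _ h2 fun x hx => ?_
    rw [g_eq_of_mem_Icc hμ ⟨by linarith [hx.1], by linarith [hx.2]⟩,
      abs_of_nonneg (by linarith [hx.1]), abs_of_nonpos hx.2, neg_neg]
    field_simp
    ring
  · refine hpiece _ _ hμ.le fun x hx => ?_
    rw [g_eq_of_mem_Icc hμ ⟨by linarith [hx.1], hx.2⟩, abs_of_nonneg (by linarith [hx.1]),
      abs_of_nonneg hx.1]
    field_simp
    ring

theorem sslud_mean_deviation_neg (μ : ℝ) (hμ : 0 < μ) (a : ℝ) (h1 : -μ ≤ a) (h2 : a < 0) :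
    (∫ x : ℝ, |x - a| * g μ x) =
      (a / μ) * Real.exp (-μ) + (a / μ - 2 / μ + 1) * Real.exp a + (2 / μ - a) := by
  have hcont : Continuous fun x => |x - a| * g μ x :=
    (continuous_abs.comp (continuous_sub_right a)).mul (continuous_g hμ)
  have htail : EqOn (fun x => (x - a) * exp (-x)) (fun x => |x - a| * g μ x) (Ioi μ) :=
    fun x hx => by
      dsimp only
      rw [g_eq_exp_neg_of_le hμ hx.out.le, abs_of_pos (by linarith [hx.out])]
  rw [integral_eq_intervalIntegral_add_integral_Ioi (by linarith : -μ ≤ μ)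
      (fun x hx => by rw [g_eq_zero_of_le hμ hx, mul_zero]) hcont.integrableOn_Ioc
      ((integrableOn_Ioi_sub_mul_exp_neg (by linarith)).congr_fun htail measurableSet_Ioi),
    intervalIntegral_abs_sub_mul_g hμ h1 h2.le, ← setIntegral_congr_fun measurableSet_Ioi htail,
    integral_Ioi_sub_mul_exp_neg (by linarith), integral_sub_mul_sub_mul_exp,
    integral_sub_mul_sub_mul_exp, integral_sub_mul_sub_mul_exp_neg, neg_zero, exp_zero]
  field_simp
  ring
end
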